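/- arXiv:2111.06543 — 3 statements merged into one kernel-verified Lean document; each statement's English description precedes it below -/
import Mathlib

section
/- Let δ > 0, let M be a smoothed maximum function as in the context, let N ≥ 2 be an integer, and define m : ℝ^N → ℝ by m(u₁,…,u_N) = −(1/N!) · Σ_{σ ∈ S_N} M(−u_{σ(1)}, M(−u_{σ(2)}, …, M(−u_{σ(N−1)}, −u_{σ(N)})⋯)). Then: (a) m is concave; (b) m is symmetric under all permutations of its arguments; (c) m(u₁+a,…,u_N+a) = m(u₁,…,u_N) + a for all a ∈ ℝ; (d) min(u₁,…,u_N) − Nδ ≤ m(u₁,…,u_N) ≤ min(u₁,…,u_N) for all u; (e) if there is an index i₀ with u_j ≥ u_{i₀} + Nδ for every j ≠ i₀, then m(u₁,…,u_N) = u_{i₀} = min(u₁,…,u_N). -/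
/-!
A convex `M` that equals `max` off the strip `|u - v| < δ` is monotone in each argument, since a
convex function of one variable that is constant on a half-line is monotone; and by the maximum
principle on the segment from `(v - δ, v)` to `(v + δ, v)` it satisfies
`max u v ≤ M (u, v) ≤ max u v + δ`. A convex function that is monotone in both arguments preserves
convexity under composition, so every nested term is convex in `u`; by induction it lies between
the largest entry and that entry plus `(N - 1) δ`, and it returns an entry exactly when that entry
exceeds all the others by `N δ`. Averaging over all orderings gives symmetry, and the sign change
turns maxima into minima and convexity into concavity.
-/

/-- The nested application `M(x₁, M(x₂, …, M(x_{N-1}, x_N)⋯))` of a two-variable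
function `M` to a list of reals. -/
noncomputable def nestM (M : ℝ × ℝ → ℝ) : List ℝ → ℝ
  | [] => 0
  | [x] => x
  | x :: y :: xs => M (x, nestM M (y :: xs))

open Set

section Convexity

variable {E : Type*} [AddCommGroup E] [Module ℝ E] {s : Set E}

theorem ConvexOn.fun_sum {ι : Type*} {f : ι → E → ℝ} (hs : Convex ℝ s) (t : Finset ι)
    (hf : ∀ i ∈ t, ConvexOn ℝ s (f i)) : ConvexOn ℝ s fun x => ∑ i ∈ t, f i x := by
  classical
  induction t using Finset.induction_on with
  | empty => simpa using convexOn_const 0 hs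
  | insert i t hi ih =>
    simp only [Finset.sum_insert hi]
    exact (hf i (Finset.mem_insert_self i t)).add
      (ih fun j hj => hf j (Finset.mem_insert_of_mem hj))

theorem ConvexOn.comp_prodMk {M : ℝ × ℝ → ℝ} {f g : E → ℝ} (hM : ConvexOn ℝ univ M)
    (hmono : Monotone M) (hf : ConvexOn ℝ s f) (hg : ConvexOn ℝ s g) :
    ConvexOn ℝ s fun x => M (f x, g x) :=
  ⟨hf.1, fun x hx y hy a b ha hb hab => calc
    M (f (a • x + b • y), g (a • x + b • y)) ≤ M (a • (f x, g x) + b • (f y, g y)) :=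
      hmono ⟨hf.2 hx hy ha hb hab, hg.2 hx hy ha hb hab⟩
    _ ≤ a • M (f x, g x) + b • M (f y, g y) := hM.2 trivial trivial ha hb hab⟩

end Convexity

theorem ConvexOn.comp_prodMk_left {M : ℝ × ℝ → ℝ} (hM : ConvexOn ℝ univ M) (a : ℝ) :
    ConvexOn ℝ univ fun t => M (a, t) :=
  ⟨convex_univ, fun x _ y _ α β hα hβ hαβ => by
    simpa [← add_mul, hαβ] using hM.2 (mem_univ (a, x)) (mem_univ (a, y)) hα hβ hαβ⟩

theorem ConvexOn.comp_prodMk_right {M : ℝ × ℝ → ℝ} (hM : ConvexOn ℝ univ M) (b : ℝ) :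
    ConvexOn ℝ univ fun t => M (t, b) :=
  ⟨convex_univ, fun x _ y _ α β hα hβ hαβ => by
    simpa [← add_mul, hαβ] using hM.2 (mem_univ (x, b)) (mem_univ (y, b)) hα hβ hαβ⟩

theorem ConvexOn.monotone_of_forall_le_eq {g : ℝ → ℝ} (hg : ConvexOn ℝ univ g) {c : ℝ}
    (hc : ∀ t ≤ c, g t = g c) : Monotone g := by
  have hge : ∀ s, g c ≤ g s := by
    intro s
    rcases le_or_gt s c with hs | hs
    · exact (hc s hs).ge
    · exact hg.le_right_of_left_le'' trivial trivial (sub_one_lt c) hs.le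
        (hc _ (sub_one_lt c).le).le
  intro s t hst
  have hx : min s c - 1 < s := by linarith [min_le_left s c]
  exact hg.le_right_of_left_le'' trivial trivial hx hst
    ((hc _ (by linarith [min_le_right s c])).trans_le (hge s))

namespace SmoothedMax

variable {δ : ℝ} {M : ℝ × ℝ → ℝ} {u v : ℝ}

theorem eq_left (hδ : 0 ≤ δ) (hmax : ∀ u v : ℝ, δ ≤ |u - v| → M (u, v) = max u v)
    (h : v + δ ≤ u) : M (u, v) = u := by
  rw [hmax u v ((by linarith : δ ≤ u - v).trans (le_abs_self _)), max_eq_left (by linarith)]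

theorem eq_right (hδ : 0 ≤ δ) (hmax : ∀ u v : ℝ, δ ≤ |u - v| → M (u, v) = max u v)
    (h : u + δ ≤ v) : M (u, v) = v := by
  rw [hmax u v ((by linarith : δ ≤ v - u).trans (abs_sub_comm v u ▸ le_abs_self _)),
    max_eq_right (by linarith)]

theorem monotone (hδ : 0 ≤ δ) (hM : ConvexOn ℝ univ M)
    (hmax : ∀ u v : ℝ, δ ≤ |u - v| → M (u, v) = max u v) : Monotone M := by
  have hfst : ∀ b, Monotone fun t => M (t, b) := fun b =>
    (hM.comp_prodMk_right b).monotone_of_forall_le_eq (c := b - δ) fun t ht => by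
      rw [eq_right hδ hmax (by linarith), eq_right hδ hmax (by linarith)]
  have hsnd : ∀ a, Monotone fun t => M (a, t) := fun a =>
    (hM.comp_prodMk_left a).monotone_of_forall_le_eq (c := a - δ) fun t ht => by
      rw [eq_left hδ hmax (by linarith), eq_left hδ hmax (by linarith)]
  rintro ⟨a, b⟩ ⟨c, d⟩ ⟨hac, hbd⟩
  exact (hfst b hac).trans (hsnd c hbd)

theorem max_le_apply (hδ : 0 ≤ δ) (hM : ConvexOn ℝ univ M)
    (hmax : ∀ u v : ℝ, δ ≤ |u - v| → M (u, v) = max u v) (u v : ℝ) : max u v ≤ M (u, v) := by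
  rcases le_or_gt δ |u - v| with h | h
  · exact (hmax u v h).ge
  rw [abs_sub_lt_iff] at h
  have hmono := monotone hδ hM hmax
  refine max_le ?_ ?_
  · calc u = M (u, u - δ) := (eq_left hδ hmax (by linarith)).symm
      _ ≤ M (u, v) := hmono ⟨le_rfl, by linarith⟩
  · calc v = M (v - δ, v) := (eq_right hδ hmax (by linarith)).symm
      _ ≤ M (u, v) := hmono ⟨by linarith, le_rfl⟩

theorem apply_le_max_add (hδ : 0 ≤ δ) (hM : ConvexOn ℝ univ M)
    (hmax : ∀ u v : ℝ, δ ≤ |u - v| → M (u, v) = max u v) (u v : ℝ) :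
    M (u, v) ≤ max u v + δ := by
  rcases le_or_gt δ |u - v| with h | h
  · rw [hmax u v h]
    linarith
  rw [abs_sub_lt_iff] at h
  calc M (u, v) ≤ max (M (v - δ, v)) (M (v + δ, v)) :=
        (hM.comp_prodMk_right v).le_max_of_mem_Icc trivial trivial ⟨by linarith, by linarith⟩
    _ = v + δ := by
      rw [eq_right hδ hmax (by linarith), eq_left hδ hmax le_rfl, max_eq_right (by linarith)]
    _ ≤ max u v + δ := by linarith [le_max_right u v]

end SmoothedMax

theorem nestM_cons_of_ne_nil (M : ℝ × ℝ → ℝ) (x : ℝ) {l : List ℝ} (hl : l ≠ []) :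
    nestM M (x :: l) = M (x, nestM M l) := by
  cases l with
  | nil => exact absurd rfl hl
  | cons y l => rfl

section Nest

variable {δ : ℝ} {M : ℝ × ℝ → ℝ}

theorem le_nestM_of_mem (hM : ∀ u v, max u v ≤ M (u, v)) :
    ∀ {l : List ℝ} {z : ℝ}, z ∈ l → z ≤ nestM M l
  | [x], z, hz => (List.mem_singleton.1 hz).le
  | x :: y :: l, z, hz => by
    refine le_trans ?_ (hM x (nestM M (y :: l)))
    rcases List.mem_cons.1 hz with rfl | hz
    · exact le_max_left _ _
    · exact (le_nestM_of_mem hM hz).trans (le_max_right _ _)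

theorem nestM_le (hδ : 0 ≤ δ) (hM : ∀ u v, M (u, v) ≤ max u v + δ) {y : ℝ} :
    ∀ {l : List ℝ}, l ≠ [] → (∀ z ∈ l, z ≤ y) → nestM M l ≤ y + (l.length - 1) * δ
  | [x], _, h => by simpa [nestM] using h x (List.mem_singleton_self x)
  | x :: z :: l, _, h => by
    have ih := nestM_le hδ hM (List.cons_ne_nil z l) fun w hw => h w (List.mem_cons_of_mem x hw)
    have hx : x ≤ y + (l.length : ℝ) * δ := by
      linarith [h x List.mem_cons_self, mul_nonneg l.length.cast_nonneg hδ]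
    calc nestM M (x :: z :: l) ≤ max x (nestM M (z :: l)) + δ := hM _ _
      _ ≤ y + (l.length : ℝ) * δ + δ := by
        gcongr
        refine max_le hx (ih.trans_eq ?_)
        simp
      _ = y + ((x :: z :: l).length - 1) * δ := by
        simp only [List.length_cons, Nat.cast_add, Nat.cast_one]
        ring

theorem nestM_map_add (hshift : ∀ u v a : ℝ, M (u + a, v + a) = M (u, v) + a) (a : ℝ) :
    ∀ {l : List ℝ}, l ≠ [] → nestM M (l.map (· + a)) = nestM M l + a
  | [x], _ => rfl
  | x :: y :: l, _ => by
    rw [List.map_cons, nestM_cons_of_ne_nil M _ (by simp),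
      nestM_map_add hshift a (List.cons_ne_nil y l), hshift]
    rfl

theorem convexOn_nestM_map {E : Type*} [AddCommGroup E] [Module ℝ E] {s : Set E}
    (hM : ConvexOn ℝ univ M) (hmono : Monotone M) (hs : Convex ℝ s) :
    ∀ (fs : List (E → ℝ)), (∀ f ∈ fs, ConvexOn ℝ s f) →
      ConvexOn ℝ s fun x => nestM M (fs.map (· x))
  | [], _ => convexOn_const 0 hs
  | [f], hf => hf f (List.mem_singleton_self f)
  | f :: g :: fs, hf =>
    hM.comp_prodMk hmono (hf f List.mem_cons_self)
      (convexOn_nestM_map hM hmono hs (g :: fs) fun h hh => hf h (List.mem_cons_of_mem f hh))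

theorem nestM_ofFn_eq_of_forall_add_le (hδ : 0 ≤ δ)
    (hmax : ∀ u v : ℝ, δ ≤ |u - v| → M (u, v) = max u v)
    (hM : ∀ u v, M (u, v) ≤ max u v + δ) :
    ∀ {n : ℕ} (f : Fin n → ℝ) (k : Fin n), (∀ j ≠ k, f j + n * δ ≤ f k) →
      nestM M (List.ofFn f) = f k
  | 0, _, k, _ => k.elim0
  | 1, f, k, _ => by simp [Subsingleton.elim k 0, nestM]
  | n + 2, f, k, h => by
    rw [List.ofFn_succ, nestM_cons_of_ne_nil M _ (by simp)]
    cases k using Fin.cases with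
    | zero =>
      -- the tail is at most `f 0 - 2 δ`, so the outer `M` is evaluated off the strip
      refine SmoothedMax.eq_left hδ hmax ?_
      have htail := nestM_le hδ hM (y := f 0 - (n + 2) * δ) (l := List.ofFn fun i => f i.succ)
        (by simp) (by
          simp only [List.mem_ofFn, forall_exists_index, forall_apply_eq_imp_iff]
          intro i
          have := h i.succ (Fin.succ_ne_zero i)
          push_cast at this
          linarith)
      simp only [List.length_ofFn, Nat.cast_add, Nat.cast_one] at htail
      linarith
    | succ k =>
      rw [nestM_ofFn_eq_of_forall_add_le hδ hmax hM (fun i => f i.succ) k fun j hj => by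
        have := h j.succ (by simpa using hj)
        push_cast at this ⊢
        linarith]
      refine SmoothedMax.eq_right hδ hmax ?_
      have := h 0 (Fin.succ_ne_zero k).symm
      push_cast at this
      linarith [mul_nonneg n.cast_nonneg hδ]

end Nest

noncomputable def smoothedMin (M : ℝ × ℝ → ℝ) {N : ℕ} (u : Fin N → ℝ) : ℝ :=
  -(1 / (N.factorial : ℝ)) * ∑ σ : Equiv.Perm (Fin N), nestM M (List.ofFn fun i => -u (σ i))

section SmoothedMin

open scoped BigOperators

variable {δ : ℝ} {M : ℝ × ℝ → ℝ} {N : ℕ}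

theorem smoothedMin_eq_neg_expect (u : Fin N → ℝ) :
    smoothedMin M u = -𝔼 σ : Equiv.Perm (Fin N), nestM M (List.ofFn fun i => -u (σ i)) := by
  rw [smoothedMin, Fintype.expect_eq_sum_div_card, Fintype.card_perm, Fintype.card_fin]
  ring

theorem concaveOn_smoothedMin (hM : ConvexOn ℝ univ M) (hmono : Monotone M) :
    ConcaveOn ℝ univ (smoothedMin M (N := N)) := by
  have hterm (σ : Equiv.Perm (Fin N)) :
      ConvexOn ℝ univ fun u : Fin N → ℝ => nestM M (List.ofFn fun i => -u (σ i)) := by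
    simpa [List.map_ofFn, Function.comp_def] using
      convexOn_nestM_map hM hmono convex_univ (List.ofFn fun i (u : Fin N → ℝ) => -u (σ i))
        fun f hf => by
          obtain ⟨i, rfl⟩ := List.mem_ofFn.1 hf
          exact (-LinearMap.proj (R := ℝ) (σ i)).convexOn convex_univ
  have hsum := (ConvexOn.fun_sum convex_univ Finset.univ fun σ _ => hterm σ).smul
    (by positivity : (0 : ℝ) ≤ 1 / N.factorial)
  refine hsum.neg.congr fun u _ => ?_
  simp [smoothedMin]

theorem smoothedMin_comp_perm (u : Fin N → ℝ) (σ : Equiv.Perm (Fin N)) :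
    smoothedMin M (u ∘ σ) = smoothedMin M u := by
  simp only [smoothedMin, Function.comp_apply]
  congr 1
  exact Equiv.sum_comp (Equiv.mulLeft σ) fun τ => nestM M (List.ofFn fun i => -u (τ i))

theorem smoothedMin_add_const (hshift : ∀ u v a : ℝ, M (u + a, v + a) = M (u, v) + a)
    (hN : N ≠ 0) (u : Fin N → ℝ) (a : ℝ) :
    smoothedMin M (fun i => u i + a) = smoothedMin M u + a := by
  have hterm (σ : Equiv.Perm (Fin N)) :
      nestM M (List.ofFn fun i => -(u (σ i) + a)) =
        nestM M (List.ofFn fun i => -u (σ i)) + -a := by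
    rw [← nestM_map_add hshift (-a) (by simpa using hN), List.map_ofFn]
    congr 2
    ext i
    simp only [Function.comp_apply]
    ring
  simp only [smoothedMin_eq_neg_expect, hterm, Finset.expect_add_distrib,
    Finset.expect_const Finset.univ_nonempty]
  ring

theorem smoothedMin_mem_Icc (hδ : 0 ≤ δ) (hlower : ∀ u v, max u v ≤ M (u, v))
    (hupper : ∀ u v, M (u, v) ≤ max u v + δ) (hne : (Finset.univ : Finset (Fin N)).Nonempty)
    (u : Fin N → ℝ) :
    smoothedMin M u ∈ Icc (Finset.univ.inf' hne u - (N - 1) * δ) (Finset.univ.inf' hne u) := by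
  obtain ⟨i, -, hi⟩ := Finset.exists_mem_eq_inf' hne u
  rw [smoothedMin_eq_neg_expect]
  constructor
  · refine le_neg.2 (Finset.expect_le Finset.univ_nonempty fun σ _ => ?_)
    have := nestM_le hδ hupper (y := -Finset.univ.inf' hne u)
      (l := List.ofFn fun j => -u (σ j)) (List.ofFn_eq_nil_iff.not.2 i.pos.ne') fun z hz => ?_
    · rw [List.length_ofFn] at this
      linarith
    · obtain ⟨j, rfl⟩ := List.mem_ofFn.1 hz
      exact neg_le_neg (Finset.inf'_le _ (Finset.mem_univ _))
  · refine neg_le.1 (Finset.le_expect Finset.univ_nonempty fun σ _ => ?_)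
    rw [hi]
    exact le_nestM_of_mem hlower (List.mem_ofFn.2 ⟨σ.symm i, by simp⟩)

theorem smoothedMin_eq_of_forall_add_le (hδ : 0 ≤ δ)
    (hmax : ∀ u v : ℝ, δ ≤ |u - v| → M (u, v) = max u v)
    (hupper : ∀ u v, M (u, v) ≤ max u v + δ) {u : Fin N → ℝ} {i₀ : Fin N}
    (h : ∀ j ≠ i₀, u i₀ + N * δ ≤ u j) : smoothedMin M u = u i₀ := by
  have hterm (σ : Equiv.Perm (Fin N)) : nestM M (List.ofFn fun i => -u (σ i)) = -u i₀ := by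
    rw [nestM_ofFn_eq_of_forall_add_le hδ hmax hupper _ (σ.symm i₀) fun j hj => ?_]
    · simp
    · have := h (σ j) (by simpa [Equiv.eq_symm_apply] using hj)
      simp only [Equiv.apply_symm_apply]
      linarith
  simp [smoothedMin_eq_neg_expect, hterm, Finset.expect_const Finset.univ_nonempty]

end SmoothedMin

/-- Properties of the smoothed minimum
`m(u) = −(1/N!) Σ_{σ ∈ S_N} M(−u_{σ(1)}, M(−u_{σ(2)}, …, M(−u_{σ(N−1)}, −u_{σ(N)})⋯))`:
it is concave, symmetric, equivariant under adding constants, within `Nδ` of the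
minimum, and equals the minimum when one entry is smaller than all others by `Nδ`. -/
theorem stmt_1 (δ : ℝ) (hδ : 0 < δ) (M : ℝ × ℝ → ℝ)
    (hM_convex : ConvexOn ℝ Set.univ M)
    (hM_max : ∀ u v : ℝ, δ ≤ |u - v| → M (u, v) = max u v)
    (hM_shift : ∀ u v a : ℝ, M (u + a, v + a) = M (u, v) + a)
    (N : ℕ) (hN : 2 ≤ N)
    (m : (Fin N → ℝ) → ℝ)
    (hm : ∀ u : Fin N → ℝ,
      m u = -(1 / (N.factorial : ℝ)) *
        ∑ σ : Equiv.Perm (Fin N), nestM M (List.ofFn fun i => -u (σ i))) :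
    ConcaveOn ℝ Set.univ m ∧
    (∀ (u : Fin N → ℝ) (σ : Equiv.Perm (Fin N)), m (u ∘ σ) = m u) ∧
    (∀ (u : Fin N → ℝ) (a : ℝ), m (fun i => u i + a) = m u + a) ∧
    (∀ u : Fin N → ℝ,
      Finset.univ.inf' ⟨⟨0, by omega⟩, Finset.mem_univ _⟩ u - N * δ ≤ m u ∧
      m u ≤ Finset.univ.inf' ⟨⟨0, by omega⟩, Finset.mem_univ _⟩ u) ∧
    (∀ (u : Fin N → ℝ) (i₀ : Fin N), (∀ j, j ≠ i₀ → u i₀ + N * δ ≤ u j) →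
      m u = u i₀ ∧ ∀ j, u i₀ ≤ u j) := by
  have hlower := SmoothedMax.max_le_apply hδ.le hM_convex hM_max
  have hupper := SmoothedMax.apply_le_max_add hδ.le hM_convex hM_max
  obtain rfl : m = smoothedMin M := funext hm
  refine ⟨concaveOn_smoothedMin hM_convex (SmoothedMax.monotone hδ.le hM_convex hM_max),
    smoothedMin_comp_perm, smoothedMin_add_const hM_shift (by omega), fun u => ?_,
    fun u i₀ h => ⟨smoothedMin_eq_of_forall_add_le hδ.le hM_max hupper h, fun j => ?_⟩⟩
  · obtain ⟨hle, hge⟩ := smoothedMin_mem_Icc hδ.le hlower hupper _ u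
    exact ⟨by linarith, hge⟩
  · rcases eq_or_ne j i₀ with rfl | hj
    · exact le_rfl
    · linarith [h j hj, mul_pos (by positivity : (0 : ℝ) < N) hδ]
end

section
/- Let δ > 0, let M be a smoothed maximum function as in the context, let N ≥ 2, and let Φ and φ_i be as in the context. Let ρ ∈ ℝ^N, and suppose {1,…,N} = K ⊔ J is a partition into two nonempty subsets such that 2ρ_j ≥ 2ρ_k + δ for all j ∈ J and k ∈ K. Then there exists λ ∈ ℝ^N with λ_j = 0 for every j ∈ J such that the Hessian of Φ at ρ maps λ to the all-ones vector, i.e. Σ_{k=1}^N (∂²Φ/∂ρ_i ∂ρ_k)(ρ) · λ_k = 1 for every i ∈ {1,…,N}. -/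
/-!
Write `K = Jᶜ`. On the open region where every gap `2ρⱼ - 2ρₖ` (`j ∈ J`, `k ∈ K`) exceeds `δ`,
`M` is the maximum on all mixed pairs, so `Φ = A(ρ_J) + exp (2 ∑_{j ∈ J} ρⱼ) • Ψ(ρ_K)` with `Ψ` the
analogue of `Φ` for the indices in `K`; by continuity the Hessians also agree at the boundary point
`ρ`. Against vectors vanishing on `J`, the Hessian row of `e_j` (`j ∈ J`) is then a multiple of
`DΨ`, and since `Ψ (x + t • 1_K) = exp (2 |K| t) • Ψ x` it is `1 / |K|` times the row of `1_K`.
The Hessian is positive definite on vectors vanishing on `J`: convexity of the exponents `φₘ` gives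
`D²Ψ (v, v) ≥ ∑ₘ exp φₘ • (Dφₘ v)²`, and `∑ₘ vₘ • Dφₘ v ≥ ∑ₘ vₘ²` because `∂₁M ≥ 0` and
`∂₁M (a, b) + ∂₁M (b, a) = 1`. Hence some `λ` vanishing on `J` has `D²Φ (e_k, λ) = 1` for `k ∈ K`,
and then `D²Φ (e_j, λ) = D²Φ (1_K, λ) / |K| = 1` for `j ∈ J`.
-/

open Set Filter Topology Real Finset

section Calculus

variable {E F : Type*} [NormedAddCommGroup E] [NormedSpace ℝ E]
  [NormedAddCommGroup F] [NormedSpace ℝ F]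

lemma ContDiff.differentiable_fderiv {f : E → F} {n : WithTop ℕ∞} (hf : ContDiff ℝ n f)
    (hn : 2 ≤ n) : Differentiable ℝ (fderiv ℝ f) :=
  (hf.fderiv_right (m := 1) hn).differentiable one_ne_zero

lemma ContDiff.continuous_fderiv_fderiv {f : E → F} {n : WithTop ℕ∞} (hf : ContDiff ℝ n f)
    (hn : 2 ≤ n) : Continuous (fderiv ℝ (fderiv ℝ f)) :=
  (hf.fderiv_right (m := 1) hn).continuous_fderiv one_ne_zero

lemma hasDerivAt_comp_add_smul {f : E → F} {x v : E} {t : ℝ}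
    (hf : DifferentiableAt ℝ f (x + t • v)) :
    HasDerivAt (fun s : ℝ => f (x + s • v)) (fderiv ℝ f (x + t • v) v) t := by
  have hline : HasDerivAt (fun s : ℝ => x + s • v) v t := by
    simpa using ((hasDerivAt_id t).smul_const v).const_add x
  exact hf.hasFDerivAt.comp_hasDerivAt t hline

lemma fderiv_fderiv_apply {f : E → F} {x : E} (hf : DifferentiableAt ℝ (fderiv ℝ f) x)
    (w u : E) : fderiv ℝ (fderiv ℝ f) x w u = fderiv ℝ (fun y => fderiv ℝ f y u) x w := by
  simp [fderiv_clm_apply hf (differentiableAt_const u)]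

lemma iteratedDeriv_two_comp_add_smul {f : E → F} (hf : ContDiff ℝ 2 f) (x v : E) :
    iteratedDeriv 2 (fun t : ℝ => f (x + t • v)) 0 = fderiv ℝ (fderiv ℝ f) x v v := by
  have hf' := hf.differentiable_fderiv le_rfl
  have hderiv : deriv (fun t : ℝ => f (x + t • v)) = fun t => fderiv ℝ f (x + t • v) v :=
    funext fun t => (hasDerivAt_comp_add_smul (hf.differentiable two_ne_zero _)).deriv
  rw [iteratedDeriv_succ, iteratedDeriv_one, hderiv, fderiv_fderiv_apply (hf' x)]
  simpa using (hasDerivAt_comp_add_smul (f := fun y => fderiv ℝ f y v) (t := 0)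
    (by simpa using (hf' x).clm_apply (differentiableAt_const v))).deriv

lemma fderiv_apply_eq_zero_of_add_smul_eq {f : E → F} {w : E}
    (h : ∀ y (t : ℝ), f (y + t • w) = f y) (x : E) : fderiv ℝ f x w = 0 := by
  by_cases hf : DifferentiableAt ℝ f x
  · have hline := hasDerivAt_comp_add_smul (t := 0) (v := w) (by simpa using hf)
    simp only [h, zero_smul, add_zero] at hline
    exact hline.unique (hasDerivAt_const 0 (f x))
  · simp [fderiv_zero_of_not_differentiableAt hf]

lemma fderiv_fderiv_apply_eq_zero_of_add_smul_eq {f : E → F} {x w : E} (hf : ContDiffAt ℝ 2 f x)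
    (h : ∀ y (t : ℝ), f (y + t • w) = f y) (u : E) : fderiv ℝ (fderiv ℝ f) x w u = 0 := by
  have hf' : DifferentiableAt ℝ (fderiv ℝ f) x :=
    (hf.fderiv_right (m := 1) le_rfl).differentiableAt one_ne_zero
  rw [hf.isSymmSndFDerivAt (by simp) w u, fderiv_fderiv_apply hf',
    funext (fderiv_apply_eq_zero_of_add_smul_eq h)]
  simp

lemma fderiv_apply_eq_mul_of_add_smul_eq_exp_mul {f : E → ℝ} {x v : E} {a : ℝ}
    (hf : DifferentiableAt ℝ f x) (h : ∀ t : ℝ, f (x + t • v) = exp (a * t) * f x) :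
    fderiv ℝ f x v = a * f x := by
  have hline := (hasDerivAt_comp_add_smul (t := 0) (v := v) (by simpa using hf)).deriv
  simp only [zero_smul, add_zero, h] at hline
  rw [← hline]
  simpa using ((((hasDerivAt_id (0 : ℝ)).const_mul a).exp).mul_const (f x)).deriv

lemma fderiv_fderiv_apply_eq_mul_of_add_smul_eq_exp_mul {f : E → ℝ} {v : E} {a : ℝ}
    (hf : ContDiff ℝ 2 f) (h : ∀ y (t : ℝ), f (y + t • v) = exp (a * t) * f y) (x u : E) :
    fderiv ℝ (fderiv ℝ f) x v u = a * fderiv ℝ f x u := by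
  have hdf := hf.differentiable two_ne_zero
  rw [hf.contDiffAt.isSymmSndFDerivAt (by simp) v u,
    fderiv_fderiv_apply (hf.differentiable_fderiv le_rfl x),
    funext fun y => fderiv_apply_eq_mul_of_add_smul_eq_exp_mul (hdf y) (h y),
    fderiv_const_mul (hdf x)]
  rfl

lemma fderiv_fderiv_eq_of_eqOn_of_mem_closure {f g : E → F} (hf : ContDiff ℝ 2 f)
    (hg : ContDiff ℝ 2 g) {s : Set E} (hs : IsOpen s) (hfg : EqOn f g s) {x : E}
    (hx : x ∈ closure s) : fderiv ℝ (fderiv ℝ f) x = fderiv ℝ (fderiv ℝ g) x := by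
  have hfg' : EqOn (fderiv ℝ (fderiv ℝ f)) (fderiv ℝ (fderiv ℝ g)) s := fun y hy =>
    (hfg.eventuallyEq_of_mem (hs.mem_nhds hy)).fderiv.fderiv_eq
  exact hfg'.closure (hf.continuous_fderiv_fderiv le_rfl) (hg.continuous_fderiv_fderiv le_rfl) hx

lemma fderiv_fderiv_add_exp_mul_apply {A Ψ : E → ℝ} {ℓ : E →L[ℝ] ℝ} {u : E}
    (hA : ContDiff ℝ 2 A) (hΨ : ContDiff ℝ 2 Ψ) (hAu : ∀ y, fderiv ℝ A y u = 0)
    (hℓu : ℓ u = 0) (x w : E) :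
    fderiv ℝ (fderiv ℝ fun y => A y + exp (ℓ y) * Ψ y) x w u =
      exp (ℓ x) * (ℓ w * fderiv ℝ Ψ x u + fderiv ℝ (fderiv ℝ Ψ) x w u) := by
  have hΨ' := hΨ.differentiable_fderiv le_rfl
  have hdΨ := hΨ.differentiable two_ne_zero
  have hE : ∀ y, HasFDerivAt (fun y => exp (ℓ y)) (exp (ℓ y) • ℓ) y := fun y =>
    ℓ.hasFDerivAt.exp
  have hfirst : (fun y => fderiv ℝ (fun y => A y + exp (ℓ y) * Ψ y) y u) =
      fun y => exp (ℓ y) * fderiv ℝ Ψ y u := by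
    funext y
    rw [fderiv_fun_add (hA.differentiable two_ne_zero y) ((hE y).differentiableAt.fun_mul (hdΨ y)),
      fderiv_fun_mul (hE y).differentiableAt (hdΨ y), (hE y).fderiv]
    simp [hAu, hℓu]
  have hΨu : DifferentiableAt ℝ (fun y => fderiv ℝ Ψ y u) x :=
    (hΨ' x).clm_apply (differentiableAt_const u)
  have hG : ContDiff ℝ 2 fun y => A y + exp (ℓ y) * Ψ y := hA.add (ℓ.contDiff.exp.mul hΨ)
  rw [fderiv_fderiv_apply (hG.differentiable_fderiv le_rfl x), hfirst,
    fderiv_fun_mul (hE x).differentiableAt hΨu, (hE x).fderiv]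
  simp only [add_apply, smul_apply, smul_eq_mul, ← fderiv_fderiv_apply (hΨ' x)]
  ring

end Calculus

lemma ConvexOn.iteratedDeriv_two_nonneg {k : ℝ → ℝ} (hk : ConvexOn ℝ univ k)
    (hd : Differentiable ℝ k) (t : ℝ) : 0 ≤ iteratedDeriv 2 k t := by
  rw [iteratedDeriv_succ, iteratedDeriv_one]
  exact (monotoneOn_univ.mp (hk.monotoneOn_deriv fun x _ => hd x)).deriv_nonneg

lemma exp_mul_deriv_sq_le_iteratedDeriv_two_exp {k : ℝ → ℝ} (hk : ContDiff ℝ 2 k)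
    (hconv : ConvexOn ℝ univ k) (t : ℝ) :
    exp (k t) * deriv k t ^ 2 ≤ iteratedDeriv 2 (fun s => exp (k s)) t := by
  have hd := hk.differentiable two_ne_zero
  have hd' : Differentiable ℝ (deriv k) :=
    (contDiff_succ_iff_deriv.mp hk).2.2.differentiable one_ne_zero
  have hderiv : deriv (fun s => exp (k s)) = fun s => exp (k s) * deriv k s :=
    funext fun s => ((hd s).hasDerivAt.exp).deriv
  have h2 : iteratedDeriv 2 (fun s => exp (k s)) t =
      exp (k t) * (deriv k t ^ 2 + iteratedDeriv 2 k t) := by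
    rw [iteratedDeriv_succ, iteratedDeriv_one, hderiv, iteratedDeriv_succ, iteratedDeriv_one,
      (((hd t).hasDerivAt.exp).fun_mul (hd' t).hasDerivAt).deriv]
    ring
  rw [h2]
  nlinarith [hconv.iteratedDeriv_two_nonneg hd t, exp_pos (k t)]

lemma ConvexOn.comp_add_smul {E : Type*} [AddCommGroup E] [Module ℝ E] {g : E → ℝ}
    (hg : ConvexOn ℝ univ g) (x v : E) : ConvexOn ℝ univ fun t : ℝ => g (x + t • v) := by
  have := hg.comp_affineMap (AffineMap.lineMap x (x + v))
  simpa [Function.comp_def, AffineMap.lineMap_apply, add_comm] using this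

lemma Submodule.exists_mem_forall_apply_eq {E : Type*} [AddCommGroup E] [Module ℝ E]
    [FiniteDimensional ℝ E] (B : E →ₗ[ℝ] E →ₗ[ℝ] ℝ) (V : Submodule ℝ E)
    (hB : ∀ v ∈ V, B v v = 0 → v = 0) (f : E →ₗ[ℝ] ℝ) : ∃ v ∈ V, ∀ u ∈ V, B u v = f u := by
  set T : V →ₗ[ℝ] Module.Dual ℝ V := B.flip.domRestrict₁₂ V V
  have hT : Function.Surjective T := by
    refine (LinearMap.injective_iff_surjective_of_finrank_eq_finrank
      (Subspace.dual_finrank_eq).symm).mp ?_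
    rw [← LinearMap.ker_eq_bot, LinearMap.ker_eq_bot']
    intro v hv
    exact Subtype.ext (hB v v.2 (LinearMap.congr_fun hv v))
  obtain ⟨v, hv⟩ := hT (f.domRestrict V)
  exact ⟨v, v.2, fun u hu => LinearMap.congr_fun hv ⟨u, hu⟩⟩

lemma sum_mul_sum_erase_ge {ι : Type*} [DecidableEq ι] (S : Finset ι) {a : ι → ι → ℝ}
    (ha : ∀ m l, 0 ≤ a m l) (ha_swap : ∀ m l, a m l + a l m = 1) (c : ℝ) (v : ι → ℝ) :
    (c - 1) * ∑ m ∈ S, v m ^ 2 ≤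
      ∑ m ∈ S, v m * (∑ l ∈ S.erase m, 2 * (v m * a m l + v l * a l m) + c * v m) := by
  -- Symmetrized, the cross terms add up to `∑_{m ≠ l} vₘ vₗ = (∑ v)² - ∑ v²`.
  have hswap : ∑ m ∈ S, ∑ l ∈ S.erase m, v m * v l * a l m =
      ∑ m ∈ S, ∑ l ∈ S.erase m, v m * v l * a m l := by
    rw [sum_comm' (t' := S) (s' := S.erase) (by aesop)]
    exact sum_congr rfl fun m _ => sum_congr rfl fun l _ => by ring
  have hcross : 2 * ∑ m ∈ S, ∑ l ∈ S.erase m, v m * v l * a l m =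
      ∑ m ∈ S, ∑ l ∈ S.erase m, v m * v l := by
    rw [two_mul]
    nth_rewrite 2 [hswap]
    rw [← sum_add_distrib]
    refine sum_congr rfl fun m _ => ?_
    rw [← sum_add_distrib]
    exact sum_congr rfl fun l _ => by rw [← mul_add, ha_swap, mul_one]
  have hsq : (∑ m ∈ S, v m) ^ 2 = ∑ m ∈ S, v m ^ 2 + ∑ m ∈ S, ∑ l ∈ S.erase m, v m * v l := by
    rw [sq, sum_mul_sum, ← sum_add_distrib]
    refine sum_congr rfl fun m hm => ?_
    rw [← add_sum_erase S _ hm]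
    ring
  have hdiag : 0 ≤ ∑ m ∈ S, ∑ l ∈ S.erase m, v m ^ 2 * a m l :=
    sum_nonneg fun m _ => sum_nonneg fun l _ => mul_nonneg (sq_nonneg _) (ha m l)
  have hexpand : ∑ m ∈ S, v m * (∑ l ∈ S.erase m, 2 * (v m * a m l + v l * a l m) + c * v m) =
      2 * ∑ m ∈ S, ∑ l ∈ S.erase m, v m ^ 2 * a m l +
        2 * ∑ m ∈ S, ∑ l ∈ S.erase m, v m * v l * a l m + c * ∑ m ∈ S, v m ^ 2 := by
    rw [mul_sum, mul_sum, mul_sum, ← sum_add_distrib, ← sum_add_distrib]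
    refine sum_congr rfl fun m _ => ?_
    rw [mul_add, mul_sum, mul_sum, mul_sum, ← sum_add_distrib]
    congr 1
    · exact sum_congr rfl fun l _ => by ring
    · ring
  rw [hexpand]
  nlinarith [sq_nonneg (∑ m ∈ S, v m)]

lemma sum_univ_erase_eq_sum_erase_add_sum_compl {ι β : Type*} [Fintype ι] [DecidableEq ι]
    [AddCommGroup β] {T : Finset ι} {m : ι} (hm : m ∈ T) (f : ι → β) :
    ∑ l ∈ univ.erase m, f l = ∑ l ∈ T.erase m, f l + ∑ l ∈ Tᶜ, f l := by
  rw [sum_erase_eq_sub (mem_univ m), sum_erase_eq_sub hm, ← sum_add_sum_compl T f]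
  abel

lemma sum_apply_single_mul {ι : Type*} [Fintype ι] [DecidableEq ι] (L : (ι → ℝ) →L[ℝ] ℝ)
    (x : ι → ℝ) : ∑ k, L (Pi.single k 1) * x k = L x := by
  conv_rhs => rw [← univ_sum_single x]
  rw [map_sum]
  refine sum_congr rfl fun k _ => ?_
  rw [mul_comm, ← smul_eq_mul, ← map_smul, ← Pi.single_smul', smul_eq_mul, mul_one]

namespace SmoothedMax

section PartialDerivatives

variable {M : ℝ × ℝ → ℝ}

lemma fderiv_apply_one_one {u v : ℝ} (hM : DifferentiableAt ℝ M (u, v))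
    (hM_shift : ∀ u v a : ℝ, M (u + a, v + a) = M (u, v) + a) :
    fderiv ℝ M (u, v) (1, 1) = 1 := by
  have hline := hasDerivAt_comp_add_smul (t := 0) (v := ((1 : ℝ), (1 : ℝ))) (by simpa using hM)
  have hshift : HasDerivAt (fun t : ℝ => M ((u, v) + t • (1, 1))) 1 0 := by
    simpa [hM_shift] using (hasDerivAt_id (0 : ℝ)).const_add (M (u, v))
  simpa using hline.unique hshift

lemma fderiv_apply_zero_one (hM : Differentiable ℝ M)
    (hM_symm : ∀ u v : ℝ, M (u, v) = M (v, u)) (u v : ℝ) :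
    fderiv ℝ M (u, v) (0, 1) = fderiv ℝ M (v, u) (1, 0) := by
  have hline (p q : ℝ × ℝ) : HasDerivAt (fun t : ℝ => M (p + t • q)) (fderiv ℝ M p q) 0 := by
    simpa using hasDerivAt_comp_add_smul (t := 0) (v := q) (by simpa using hM p)
  refine (hline (u, v) (0, 1)).unique ?_
  simpa [hM_symm u] using hline (v, u) (1, 0)

lemma fderiv_apply_one_zero_nonneg (hM : Differentiable ℝ M) (hM_convex : ConvexOn ℝ univ M)
    {δ : ℝ} (hM_max : ∀ u v : ℝ, δ ≤ |u - v| → M (u, v) = max u v) (u v : ℝ) :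
    0 ≤ fderiv ℝ M (u, v) (1, 0) := by
  -- `t ↦ M (u + t, v)` is convex and constant for `t ≪ 0`, and its derivative is monotone.
  set g : ℝ → ℝ := fun t => M ((u, v) + t • (1, 0))
  have hg (t : ℝ) : HasDerivAt g (fderiv ℝ M ((u, v) + t • (1, 0)) (1, 0)) t :=
    hasDerivAt_comp_add_smul (hM _)
  have hmono := (hM_convex.comp_add_smul (u, v) (1, 0)).monotoneOn_deriv
    fun t _ => (hg t).differentiableAt
  set t₀ := min 0 (v - |δ| - u) - 1
  have hflat : g =ᶠ[𝓝 t₀] fun _ => v := by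
    have ht₀ : t₀ < v - |δ| - u := by linarith [min_le_right 0 (v - |δ| - u)]
    filter_upwards [Iio_mem_nhds ht₀] with t (ht : t < v - |δ| - u)
    have hle : u + t + |δ| ≤ v := by linarith
    have hgap : δ ≤ |u + t - v| := by
      rw [abs_sub_comm]; exact (le_abs_self _).trans' (by linarith [le_abs_self δ])
    simp [g, hM_max _ _ hgap, show u + t ≤ v by linarith [abs_nonneg δ]]
  have := hmono (mem_univ t₀) (mem_univ 0) (by simp [t₀])
  rw [hflat.deriv_eq, (hg 0).deriv] at this
  simpa using this

end PartialDerivatives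

variable {ι : Type*} [DecidableEq ι]

-- `exponent M S c m` is `φₘ` computed among the indices in `S` with linear coefficient `c`, so
-- `φᵢ = exponent M univ 2 i` and `Φ = potential M univ 2`.
noncomputable def exponent (M : ℝ × ℝ → ℝ) (S : Finset ι) (c : ℝ) (m : ι) (x : ι → ℝ) : ℝ :=
  ∑ l ∈ S.erase m, M (2 * x m, 2 * x l) + c * x m

noncomputable def potential (M : ℝ × ℝ → ℝ) (S : Finset ι) (c : ℝ) (x : ι → ℝ) : ℝ :=
  ∑ m ∈ S, exp (exponent M S c m x)

variable {M : ℝ × ℝ → ℝ} {S : Finset ι} {c : ℝ}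

lemma contDiff_exponent [Fintype ι] {n : WithTop ℕ∞} (hM : ContDiff ℝ n M) (m : ι) :
    ContDiff ℝ n (exponent M S c m) := by
  unfold exponent
  fun_prop

lemma contDiff_potential [Fintype ι] {n : WithTop ℕ∞} (hM : ContDiff ℝ n M) :
    ContDiff ℝ n (potential M S c) :=
  ContDiff.sum fun m _ => (contDiff_exponent hM m).exp

lemma fderiv_exponent_apply [Fintype ι] (hM : Differentiable ℝ M) (m : ι) (x v : ι → ℝ) :
    fderiv ℝ (exponent M S c m) x v =
      ∑ l ∈ S.erase m, fderiv ℝ M (2 * x m, 2 * x l) (2 * v m, 2 * v l) + c * v m := by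
  let L (l : ι) : (ι → ℝ) →L[ℝ] ℝ × ℝ :=
    ((2 : ℝ) • ContinuousLinearMap.proj m).prod ((2 : ℝ) • ContinuousLinearMap.proj l)
  have hpair (l : ι) : HasFDerivAt (fun y : ι → ℝ => M (2 * y m, 2 * y l))
      ((fderiv ℝ M (2 * x m, 2 * x l)).comp (L l)) x :=
    (hM _).hasFDerivAt.comp x (L l).hasFDerivAt
  have h : HasFDerivAt (exponent M S c m) _ x :=
    (HasFDerivAt.fun_sum (u := S.erase m) fun l _ => hpair l).add
      ((ContinuousLinearMap.proj (R := ℝ) (φ := fun _ : ι => ℝ) m).hasFDerivAt.const_mul c)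
  rw [h.fderiv]
  simp [L]

lemma convexOn_exponent (hM : ConvexOn ℝ univ M) (m : ι) :
    ConvexOn ℝ univ (exponent M S c m) := by
  have hpair (l : ι) : ConvexOn ℝ univ fun y : ι → ℝ => M (2 * y m, 2 * y l) := by
    simpa [Function.comp_def] using hM.comp_linearMap
      ((2 : ℝ) • (LinearMap.proj (R := ℝ) (φ := fun _ : ι => ℝ) m).prod (LinearMap.proj l))
  have hsum : ConvexOn ℝ univ (∑ l ∈ S.erase m, fun y : ι → ℝ => M (2 * y m, 2 * y l)) :=
    sum_induction _ (ConvexOn ℝ univ) (fun _ _ => ConvexOn.add)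
      (convexOn_const 0 convex_univ) fun l _ => hpair l
  have hlin : ConvexOn ℝ univ fun y : ι → ℝ => c * y m :=
    (c • LinearMap.proj (R := ℝ) (φ := fun _ : ι => ℝ) m).convexOn convex_univ
  refine (hsum.add hlin).congr fun y _ => ?_
  simp [exponent]

lemma potential_add_of_eq_zero {w : ι → ℝ} (hw : ∀ i ∈ S, w i = 0) (x : ι → ℝ) :
    potential M S c (x + w) = potential M S c x := by
  refine sum_congr rfl fun m hm => ?_
  simp only [exponent, Pi.add_apply, hw m hm, add_zero]
  congr 2
  exact sum_congr rfl fun l hl => by rw [hw l (mem_of_mem_erase hl), add_zero]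

lemma potential_add_smul_indicator
    (hM_shift : ∀ u v a : ℝ, M (u + a, v + a) = M (u, v) + a) (x : ι → ℝ) (t : ℝ) :
    potential M S c (x + t • (S : Set ι).indicator (1 : ι → ℝ)) =
      exp ((2 * (#S - 1) + c) * t) * potential M S c x := by
  rw [potential, potential, mul_sum]
  refine sum_congr rfl fun m hm => ?_
  rw [← exp_add]
  congr 1
  have hx (i) (hi : i ∈ S) : (x + t • (S : Set ι).indicator (1 : ι → ℝ)) i = x i + t := by
    simp [hi]
  simp only [exponent, hx m hm]
  rw [sum_congr rfl fun l hl => by rw [hx l (mem_of_mem_erase hl), mul_add, mul_add, hM_shift],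
    sum_add_distrib, sum_const, card_erase_of_mem hm, nsmul_eq_mul,
    Nat.cast_sub (card_pos.mpr ⟨m, hm⟩)]
  push_cast
  ring

lemma sum_mul_fderiv_exponent_ge [Fintype ι] (hM : Differentiable ℝ M)
    (hM_convex : ConvexOn ℝ univ M) {δ : ℝ} (hM_max : ∀ u v : ℝ, δ ≤ |u - v| → M (u, v) = max u v)
    (hM_shift : ∀ u v a : ℝ, M (u + a, v + a) = M (u, v) + a)
    (hM_symm : ∀ u v : ℝ, M (u, v) = M (v, u)) (x v : ι → ℝ) :
    (c - 1) * ∑ m ∈ S, v m ^ 2 ≤ ∑ m ∈ S, v m * fderiv ℝ (exponent M S c m) x v := by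
  set a : ι → ι → ℝ := fun m l => fderiv ℝ M (2 * x m, 2 * x l) (1, 0)
  have hsplit (m l : ι) : fderiv ℝ M (2 * x m, 2 * x l) (2 * v m, 2 * v l) =
      2 * (v m * a m l + v l * a l m) := by
    rw [show ((2 * v m, 2 * v l) : ℝ × ℝ) = (2 * v m) • (1, 0) + (2 * v l) • (0, 1) by simp,
      map_add, map_smul, map_smul, fderiv_apply_zero_one hM hM_symm]
    simp only [a, smul_eq_mul]
    ring
  have ha_swap (m l : ι) : a m l + a l m = 1 := by
    simp only [a]
    rw [← fderiv_apply_zero_one hM hM_symm, ← map_add]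
    simpa using fderiv_apply_one_one (hM _) hM_shift
  simp only [fderiv_exponent_apply hM, hsplit]
  exact sum_mul_sum_erase_ge S (fun m l => fderiv_apply_one_zero_nonneg hM hM_convex hM_max _ _)
    ha_swap c v

lemma sum_exp_mul_sq_le_fderiv_fderiv_potential [Fintype ι] (hM : ContDiff ℝ 2 M)
    (hM_convex : ConvexOn ℝ univ M) (x v : ι → ℝ) :
    ∑ m ∈ S, exp (exponent M S c m x) * fderiv ℝ (exponent M S c m) x v ^ 2 ≤
      fderiv ℝ (fderiv ℝ (potential M S c)) x v v := by
  have hk (m : ι) : ContDiff ℝ 2 fun t : ℝ => exponent M S c m (x + t • v) :=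
    (contDiff_exponent hM m).comp (contDiff_const.add (contDiff_id.smul contDiff_const))
  rw [← iteratedDeriv_two_comp_add_smul (contDiff_potential hM)]
  unfold potential
  rw [iteratedDeriv_fun_sum fun m _ => (hk m).exp.contDiffAt]
  refine sum_le_sum fun m _ => ?_
  have hline := hasDerivAt_comp_add_smul (t := 0) (v := v)
    (by simpa using (contDiff_exponent (S := S) (c := c) hM m).differentiable two_ne_zero x)
  simpa [hline.deriv] using exp_mul_deriv_sq_le_iteratedDeriv_two_exp (hk m)
    ((convexOn_exponent hM_convex m).comp_add_smul x v) 0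

lemma fderiv_fderiv_potential_apply_self_pos [Fintype ι] (hM : ContDiff ℝ 2 M)
    (hM_convex : ConvexOn ℝ univ M) {δ : ℝ} (hM_max : ∀ u v : ℝ, δ ≤ |u - v| → M (u, v) = max u v)
    (hM_shift : ∀ u v a : ℝ, M (u + a, v + a) = M (u, v) + a)
    (hM_symm : ∀ u v : ℝ, M (u, v) = M (v, u)) (hc : 1 < c) (x : ι → ℝ) {v : ι → ℝ}
    (hvS : ∀ i ∉ S, v i = 0) (hv : v ≠ 0) :
    0 < fderiv ℝ (fderiv ℝ (potential M S c)) x v v := by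
  by_contra! hle
  have hterm_nonneg (m : ι) :
      0 ≤ exp (exponent M S c m x) * fderiv ℝ (exponent M S c m) x v ^ 2 := by positivity
  have hgrad (m : ι) (hm : m ∈ S) : fderiv ℝ (exponent M S c m) x v = 0 := by
    have hzero := (sum_eq_zero_iff_of_nonneg fun m _ => hterm_nonneg m).mp
      ((sum_exp_mul_sq_le_fderiv_fderiv_potential hM hM_convex x v).trans hle
        |>.antisymm (sum_nonneg fun m _ => hterm_nonneg m)) m hm
    simpa [(exp_pos _).ne'] using hzero
  have hvS' : ∀ m ∈ S, v m = 0 := by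
    have hcoer := sum_mul_fderiv_exponent_ge (S := S) (c := c) (hM.differentiable two_ne_zero)
      hM_convex hM_max hM_shift hM_symm x v
    have hcross : ∑ m ∈ S, v m * fderiv ℝ (exponent M S c m) x v = 0 :=
      sum_eq_zero fun m hm => by rw [hgrad m hm, mul_zero]
    rw [hcross] at hcoer
    have hsq : ∑ m ∈ S, v m ^ 2 ≤ 0 := nonpos_of_mul_nonpos_right hcoer (sub_pos.mpr hc)
    simpa using (sum_eq_zero_iff_of_nonneg fun m _ => sq_nonneg (v m)).mp
      (hsq.antisymm (sum_nonneg fun m _ => sq_nonneg _))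
  exact hv (funext fun i => if hi : i ∈ S then hvS' i hi else hvS i hi)

lemma potential_univ_eq_of_gap [Fintype ι] {δ : ℝ} (hδ : 0 ≤ δ)
    (hM_max : ∀ u v : ℝ, δ ≤ |u - v| → M (u, v) = max u v) {J : Finset ι} {x : ι → ℝ}
    (hx : ∀ j ∈ J, ∀ k ∈ Jᶜ, 2 * x k + δ ≤ 2 * x j) :
    potential M univ 2 x =
      potential M J (2 * (#Jᶜ + 1)) x + exp (∑ j ∈ J, 2 * x j) * potential M Jᶜ 2 x := by
  have hmax {j k : ι} (hj : j ∈ J) (hk : k ∈ Jᶜ) :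
      M (2 * x j, 2 * x k) = 2 * x j ∧ M (2 * x k, 2 * x j) = 2 * x j := by
    have hgap := hx j hj k hk
    rw [hM_max _ _ ((le_abs_self _).trans' (by linarith)),
      hM_max _ _ (by rw [abs_sub_comm]; exact (le_abs_self _).trans' (by linarith))]
    exact ⟨max_eq_left (by linarith), max_eq_right (by linarith)⟩
  rw [potential, ← sum_add_sum_compl J, potential, potential, mul_sum]
  congr 1
  · refine sum_congr rfl fun j hj => ?_
    rw [exponent, exponent, sum_univ_erase_eq_sum_erase_add_sum_compl hj,
      sum_congr rfl fun k hk => (hmax hj hk).1, sum_const, nsmul_eq_mul]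
    ring_nf
  · refine sum_congr rfl fun k hk => ?_
    rw [← exp_add, exponent, exponent, sum_univ_erase_eq_sum_erase_add_sum_compl hk, compl_compl,
      sum_congr rfl fun j hj => (hmax hj hk).2]
    ring_nf

lemma mem_closure_of_gap [Fintype ι] {δ : ℝ} {J : Finset ι} {ρ : ι → ℝ}
    (hρ : ∀ j ∈ J, ∀ k ∈ Jᶜ, 2 * ρ k + δ ≤ 2 * ρ j) :
    ρ ∈ closure {x | ∀ j ∈ J, ∀ k ∈ Jᶜ, 2 * x k + δ < 2 * x j} := by
  have hlim : Tendsto (fun t : ℝ => ρ + t • (J : Set ι).indicator (1 : ι → ℝ)) (𝓝[>] 0) (𝓝 ρ) := by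
    refine tendsto_nhdsWithin_of_tendsto_nhds ?_
    simpa using ((continuous_id.smul continuous_const).const_add ρ).tendsto (0 : ℝ)
  refine mem_closure_of_tendsto hlim ?_
  filter_upwards [self_mem_nhdsWithin] with t (ht : 0 < t) j hj k hk
  simp [hj, mem_compl.mp hk]
  linarith [hρ j hj k hk]

lemma fderiv_fderiv_potential_univ_apply_of_gap [Fintype ι] (hM : ContDiff ℝ 2 M) {δ : ℝ}
    (hδ : 0 ≤ δ) (hM_max : ∀ u v : ℝ, δ ≤ |u - v| → M (u, v) = max u v) {J : Finset ι}
    {ρ : ι → ℝ} (hρ : ∀ j ∈ J, ∀ k ∈ Jᶜ, 2 * ρ k + δ ≤ 2 * ρ j) {u : ι → ℝ}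
    (hu : ∀ j ∈ J, u j = 0) (w : ι → ℝ) :
    fderiv ℝ (fderiv ℝ (potential M univ 2)) ρ w u =
      exp (∑ j ∈ J, 2 * ρ j) * ((∑ j ∈ J, 2 * w j) * fderiv ℝ (potential M Jᶜ 2) ρ u +
        fderiv ℝ (fderiv ℝ (potential M Jᶜ 2)) ρ w u) := by
  set ℓ : (ι → ℝ) →L[ℝ] ℝ := ∑ j ∈ J, (2 : ℝ) • ContinuousLinearMap.proj j
  have hℓ (y : ι → ℝ) : ℓ y = ∑ j ∈ J, 2 * y j := by simp [ℓ]
  -- `ρ` may lie on the boundary of `s`: the Hessians agree on `s`, hence on its closure.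
  set s := {x : ι → ℝ | ∀ j ∈ J, ∀ k ∈ Jᶜ, 2 * x k + δ < 2 * x j}
  have hs : IsOpen s := by
    simp only [s, ofPred_forall]
    exact isOpen_biInter_finset fun j _ => isOpen_biInter_finset fun k _ =>
      isOpen_lt (by fun_prop) (by fun_prop)
  have hA := contDiff_potential (S := J) (c := 2 * (#Jᶜ + 1)) hM
  have hΨ := contDiff_potential (S := Jᶜ) (c := 2) hM
  have heq : EqOn (potential M univ 2) (fun y => potential M J (2 * (#Jᶜ + 1)) y +
      exp (ℓ y) * potential M Jᶜ 2 y) s := fun y hy => by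
    simpa only [hℓ] using potential_univ_eq_of_gap hδ hM_max fun j hj k hk => (hy j hj k hk).le
  have hAu : ∀ y, fderiv ℝ (potential M J (2 * (#Jᶜ + 1))) y u = 0 :=
    fderiv_apply_eq_zero_of_add_smul_eq fun y t =>
      potential_add_of_eq_zero (fun i hi => by simp [hu i hi]) y
  rw [fderiv_fderiv_eq_of_eqOn_of_mem_closure (contDiff_potential hM)
      (hA.add (ℓ.contDiff.exp.mul hΨ)) hs heq (mem_closure_of_gap hρ),
    fderiv_fderiv_add_exp_mul_apply hA hΨ hAu
      (by rw [hℓ]; exact sum_eq_zero fun j hj => by rw [hu j hj, mul_zero]), hℓ, hℓ]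

lemma fderiv_fderiv_potential_univ_apply_self_pos_of_gap [Fintype ι] (hM : ContDiff ℝ 2 M)
    (hM_convex : ConvexOn ℝ univ M) {δ : ℝ} (hδ : 0 ≤ δ)
    (hM_max : ∀ u v : ℝ, δ ≤ |u - v| → M (u, v) = max u v)
    (hM_shift : ∀ u v a : ℝ, M (u + a, v + a) = M (u, v) + a)
    (hM_symm : ∀ u v : ℝ, M (u, v) = M (v, u)) {J : Finset ι} {ρ : ι → ℝ}
    (hρ : ∀ j ∈ J, ∀ k ∈ Jᶜ, 2 * ρ k + δ ≤ 2 * ρ j) {u : ι → ℝ} (hu : ∀ j ∈ J, u j = 0)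
    (hu₀ : u ≠ 0) : 0 < fderiv ℝ (fderiv ℝ (potential M univ 2)) ρ u u := by
  have hℓu : ∑ j ∈ J, 2 * u j = 0 := sum_eq_zero fun j hj => by rw [hu j hj, mul_zero]
  rw [fderiv_fderiv_potential_univ_apply_of_gap hM hδ hM_max hρ hu, hℓu, zero_mul, zero_add]
  exact mul_pos (exp_pos _) (fderiv_fderiv_potential_apply_self_pos hM hM_convex hM_max hM_shift
    hM_symm one_lt_two ρ (fun i hi => hu i (by simpa using hi)) hu₀)

lemma card_mul_fderiv_fderiv_potential_univ_single_of_gap [Fintype ι] (hM : ContDiff ℝ 2 M)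
    {δ : ℝ} (hδ : 0 ≤ δ) (hM_max : ∀ u v : ℝ, δ ≤ |u - v| → M (u, v) = max u v)
    (hM_shift : ∀ u v a : ℝ, M (u + a, v + a) = M (u, v) + a) {J : Finset ι} {ρ : ι → ℝ}
    (hρ : ∀ j ∈ J, ∀ k ∈ Jᶜ, 2 * ρ k + δ ≤ 2 * ρ j) {u : ι → ℝ} (hu : ∀ j ∈ J, u j = 0)
    {j : ι} (hj : j ∈ J) :
    #Jᶜ * fderiv ℝ (fderiv ℝ (potential M univ 2)) ρ (Pi.single j 1) u =
      fderiv ℝ (fderiv ℝ (potential M univ 2)) ρ ((J : Set ι)ᶜ.indicator 1) u := by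
  have hΨ := contDiff_potential (S := Jᶜ) (c := 2) hM
  have hsingle : fderiv ℝ (fderiv ℝ (potential M Jᶜ 2)) ρ (Pi.single j 1) u = 0 :=
    fderiv_fderiv_apply_eq_zero_of_add_smul_eq hΨ.contDiffAt (fun y t =>
      potential_add_of_eq_zero (fun i hi => by
        have hij : i ≠ j := fun h => mem_compl.mp hi (h ▸ hj)
        simp [hij]) y) u
  have hones := fderiv_fderiv_apply_eq_mul_of_add_smul_eq_exp_mul hΨ
    (potential_add_smul_indicator hM_shift) ρ u
  rw [coe_compl] at hones
  rw [fderiv_fderiv_potential_univ_apply_of_gap hM hδ hM_max hρ hu,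
    fderiv_fderiv_potential_univ_apply_of_gap hM hδ hM_max hρ hu, hsingle, hones]
  have hℓ_single : ∑ i ∈ J, 2 * (Pi.single j 1 : ι → ℝ) i = 2 := by
    rw [← mul_sum]
    simp [hj]
  have hℓ_ones : ∑ i ∈ J, 2 * (J : Set ι)ᶜ.indicator (1 : ι → ℝ) i = 0 :=
    sum_eq_zero fun i hi => by simp [hi]
  rw [hℓ_single, hℓ_ones]
  ring

end SmoothedMax

open SmoothedMax

theorem stmt_9_general (δ : ℝ) (hδ : 0 < δ) (M : ℝ × ℝ → ℝ)
    (hM_smooth : ContDiff ℝ (⊤ : ℕ∞) M)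
    (hM_convex : ConvexOn ℝ Set.univ M)
    (hM_max : ∀ u v : ℝ, δ ≤ |u - v| → M (u, v) = max u v)
    (hM_shift : ∀ u v a : ℝ, M (u + a, v + a) = M (u, v) + a)
    (hM_symm : ∀ u v : ℝ, M (u, v) = M (v, u))
    (N : ℕ)
    (Φ : (Fin N → ℝ) → ℝ)
    (hΦ : ∀ ρ : Fin N → ℝ,
      Φ ρ = ∑ i, Real.exp ((∑ j ∈ Finset.univ.erase i, M (2 * ρ i, 2 * ρ j)) + 2 * ρ i))
    (ρ : Fin N → ℝ) (J : Finset (Fin N)) (hK : Jᶜ.Nonempty)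
    (hgap : ∀ j ∈ J, ∀ k ∈ Jᶜ, 2 * ρ k + δ ≤ 2 * ρ j) :
    ∃ lam : Fin N → ℝ, (∀ j ∈ J, lam j = 0) ∧
      ∀ i : Fin N,
        ∑ k : Fin N,
          fderiv ℝ (fderiv ℝ Φ) ρ (Pi.single i 1) (Pi.single k 1) * lam k = 1 := by
  obtain rfl : Φ = potential M univ 2 := funext hΦ
  have hM : ContDiff ℝ 2 M := hM_smooth.of_le (WithTop.coe_le_coe.mpr le_top)
  set D := fderiv ℝ (fderiv ℝ (potential M univ 2)) ρ
  set V : Submodule ℝ (Fin N → ℝ) := Submodule.pi (J : Set (Fin N)) fun _ => ⊥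
  have hV (u : Fin N → ℝ) : u ∈ V ↔ ∀ j ∈ J, u j = 0 := by simp [V, Submodule.mem_pi]
  obtain ⟨lam, hlamV, hlam⟩ := V.exists_mem_forall_apply_eq D.toLinearMap₁₂
    (fun u hu hDu => by_contra fun hu₀ => (fderiv_fderiv_potential_univ_apply_self_pos_of_gap hM
      hM_convex hδ.le hM_max hM_shift hM_symm hgap ((hV u).mp hu) hu₀).ne' hDu)
    (∑ i, LinearMap.proj i)
  simp only [ContinuousLinearMap.toLinearMap₁₂_apply_apply_apply, LinearMap.sum_apply,
    LinearMap.proj_apply] at hlam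
  refine ⟨lam, (hV lam).mp hlamV, fun i => ?_⟩
  rw [sum_apply_single_mul]
  by_cases hi : i ∈ J
  · have hrow := card_mul_fderiv_fderiv_potential_univ_single_of_gap hM hδ.le hM_max hM_shift hgap
      ((hV lam).mp hlamV) hi
    have hones : (J : Set (Fin N))ᶜ.indicator 1 ∈ V := (hV _).mpr fun j hj => by simp [hj]
    have hD_ones : D ((J : Set (Fin N))ᶜ.indicator 1) lam = #Jᶜ := by
      rw [hlam _ hones, ← coe_compl, sum_indicator_subset _ (subset_univ _)]
      simp
    rw [hD_ones] at hrow
    simpa [hK.card_pos.ne'] using hrow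
  · have hsingle : Pi.single i 1 ∈ V := (hV _).mpr fun j hj => by simp [ne_of_mem_of_not_mem hj hi]
    simpa using hlam _ hsingle

/-- With `Φ` as in Statement 7, if the indices split into
nonempty sets `J` and `K = Jᶜ` with `2ρⱼ ≥ 2ρ_k + δ` for all `j ∈ J`, `k ∈ K`,
then there is a vector `λ` vanishing on `J` which the Hessian of `Φ` at `ρ`
maps to the all-ones vector. -/
theorem stmt_9 (δ : ℝ) (hδ : 0 < δ) (M : ℝ × ℝ → ℝ)
    (hM_smooth : ContDiff ℝ (⊤ : ℕ∞) M)
    (hM_convex : ConvexOn ℝ Set.univ M)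
    (hM_max : ∀ u v : ℝ, δ ≤ |u - v| → M (u, v) = max u v)
    (hM_shift : ∀ u v a : ℝ, M (u + a, v + a) = M (u, v) + a)
    (hM_symm : ∀ u v : ℝ, M (u, v) = M (v, u))
    (N : ℕ) (hN : 2 ≤ N)
    (Φ : (Fin N → ℝ) → ℝ)
    (hΦ : ∀ ρ : Fin N → ℝ,
      Φ ρ = ∑ i, Real.exp ((∑ j ∈ Finset.univ.erase i, M (2 * ρ i, 2 * ρ j)) + 2 * ρ i))
    (ρ : Fin N → ℝ) (J : Finset (Fin N)) (hJ : J.Nonempty) (hK : Jᶜ.Nonempty)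
    (hgap : ∀ j ∈ J, ∀ k ∈ Jᶜ, 2 * ρ k + δ ≤ 2 * ρ j) :
    ∃ lam : Fin N → ℝ, (∀ j ∈ J, lam j = 0) ∧
      ∀ i : Fin N,
        ∑ k : Fin N,
          fderiv ℝ (fderiv ℝ Φ) ρ (Pi.single i 1) (Pi.single k 1) * lam k = 1 :=
  stmt_9_general δ hδ M hM_smooth hM_convex hM_max hM_shift hM_symm N Φ hΦ ρ J hK hgap
end

section
/- Let n ≥ 1, k ≥ 1, and for each i ∈ {1,…,k} let P_{i,ℤ} ⊂ ℤ^n be a finite nonempty set and ν_i : P_{i,ℤ} → ℝ. Assume that the set of differences {α − α' : α, α' ∈ P_{i,ℤ}, 1 ≤ i ≤ k} spans ℝ^n. Let δ' ≥ 0 and for each i let m_i : (P_{i,ℤ} → ℝ) → ℝ be a concave function satisfying m_i(u + a·𝟙) = m_i(u) + a for all a ∈ ℝ and min_α u(α) − δ' ≤ m_i(u) ≤ min_α u(α) for all u. For (ξ, η) ∈ ℝ^n × ℝ^k define μ_{i,α}(ξ,η) = η_i − ⟨α, ξ⟩ + ν_i(α), and H(ξ,η) = Σ_{i=1}^k ( Σ_{α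 ∈ P_{i,ℤ}} μ_{i,α}(ξ,η) − |P_{i,ℤ}| · m_i((μ_{i,α}(ξ,η))_α) ). Then: (i) H(ξ,η) = H(ξ,η') for all η, η' ∈ ℝ^k; (ii) H is convex as a function of (ξ,η); (iii) H ≥ 0; (iv) there exist constants c > 0 and C > 0 such that c‖ξ‖ − C ≤ H(ξ,η) ≤ C(‖ξ‖ + 1) for all (ξ,η). -/
/-!
Each block contributes the excess `∑_α (μ_α - m(μ))` of its weights over `m`. Since `m` commutes
with adding constants, the excess only sees differences of weights, so it does not depend on `η`.
It is convex because `m` is concave and the weights are affine in `(ξ, η)`; it is at least the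
oscillation `|μ_a - μ_b|` because `m ≤ min`, and at most `|P|·(osc + δ')` because `m ≥ min - δ'`.
Up to bounded terms the oscillations are `|⟪α_a - α_b, ξ⟫|`, which grow at most linearly; as the
differences `α_a - α_b` span, `ξ ↦ (⟪α_a - α_b, ξ⟫)` is an injective linear map on a
finite-dimensional space, hence bounded below by `c‖ξ‖`.
-/

open scoped RealInnerProductSpace
open Finset

theorem ConvexOn.finset_sum {𝕜 E β ι : Type*} [Semiring 𝕜] [PartialOrder 𝕜]
    [AddCommMonoid E] [AddCommMonoid β] [PartialOrder β] [IsOrderedAddMonoid β] [SMul 𝕜 E]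
    [Module 𝕜 β] {s : Set E} (hs : Convex 𝕜 s) (t : Finset ι) {f : ι → E → β}
    (hf : ∀ i ∈ t, ConvexOn 𝕜 s (f i)) : ConvexOn 𝕜 s fun x => ∑ i ∈ t, f i x := by
  classical
  induction t using Finset.induction_on with
  | empty => simpa using convexOn_const (0 : β) hs
  | insert i t hi ih =>
    simp only [sum_insert hi]
    exact (hf i (mem_insert_self i t)).add (ih fun j hj => hf j (mem_insert_of_mem hj))

section Excess

variable {ι : Type*} [Fintype ι]

def excess (m : (ι → ℝ) → ℝ) (u : ι → ℝ) : ℝ := ∑ j, (u j - m u)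

variable {m : (ι → ℝ) → ℝ}

theorem excess_eq_sum_sub_card_mul (m : (ι → ℝ) → ℝ) (u : ι → ℝ) :
    excess m u = ∑ j, u j - Fintype.card ι * m u := by
  simp [excess, Finset.sum_sub_distrib]

theorem excess_add_const (hm : ∀ u a, m (fun j => u j + a) = m u + a) (u : ι → ℝ) (a : ℝ) :
    excess m (fun j => u j + a) = excess m u := by
  simp only [excess, hm]
  congr! 1 with j
  ring

theorem convexOn_excess (hm : ConcaveOn ℝ Set.univ m) : ConvexOn ℝ Set.univ (excess m) :=
  ConvexOn.finset_sum convex_univ univ fun j _ =>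
    ((LinearMap.proj j : (ι → ℝ) →ₗ[ℝ] ℝ).convexOn convex_univ).sub hm

variable [Nonempty ι] {u : ι → ℝ}

theorem sub_le_excess (hm : ∀ u, m u ≤ univ.inf' univ_nonempty u) (a b : ι) :
    u a - u b ≤ excess m u := by
  have hle : ∀ j, m u ≤ u j := fun j => (hm u).trans (inf'_le _ (mem_univ j))
  calc u a - u b ≤ u a - m u := by linarith [hle b]
    _ ≤ excess m u := single_le_sum (f := fun j => u j - m u)
        (fun j _ => sub_nonneg.2 (hle j)) (mem_univ a)

theorem excess_nonneg (hm : ∀ u, m u ≤ univ.inf' univ_nonempty u) : 0 ≤ excess m u := by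
  simpa using sub_le_excess (u := u) hm (Classical.arbitrary ι) (Classical.arbitrary ι)

theorem abs_sub_le_excess (hm : ∀ u, m u ≤ univ.inf' univ_nonempty u) (a b : ι) :
    |u a - u b| ≤ excess m u :=
  abs_sub_le_iff.2 ⟨sub_le_excess hm a b, sub_le_excess hm b a⟩

theorem excess_le {δ R : ℝ} (hm : ∀ u, univ.inf' univ_nonempty u - δ ≤ m u)
    (hR : ∀ j j', u j - u j' ≤ R) : excess m u ≤ Fintype.card ι * (R + δ) := by
  obtain ⟨j₀, -, hj₀⟩ := exists_mem_eq_inf' univ_nonempty u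
  have hm₀ := hm u
  rw [hj₀] at hm₀
  calc excess m u ≤ ∑ _j : ι, (R + δ) :=
        sum_le_sum fun j _ => by linarith [hR j j₀]
    _ = Fintype.card ι * (R + δ) := by simp [mul_add]

end Excess

section Hamiltonian

variable {E : Type*} [NormedAddCommGroup E] [InnerProductSpace ℝ E]

theorem exists_pos_mul_norm_le_norm_inner [FiniteDimensional ℝ E] {S : Type*} [Fintype S]
    (d : S → E) (hd : Submodule.span ℝ (Set.range d) = ⊤) :
    ∃ c > 0, ∀ ξ : E, c * ‖ξ‖ ≤ ‖fun s => ⟪d s, ξ⟫‖ := by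
  let T : E →ₗ[ℝ] S → ℝ := LinearMap.pi fun s => innerₛₗ ℝ (d s)
  have hT : LinearMap.ker T = ⊥ := by
    refine (Submodule.eq_bot_iff _).2 fun ξ hξ => ?_
    have hperp : Set.range d ⊆ LinearMap.ker (innerₛₗ ℝ ξ) := by
      rintro _ ⟨s, rfl⟩
      simpa [T, real_inner_comm] using congr_fun hξ s
    have hξξ : ξ ∈ LinearMap.ker (innerₛₗ ℝ ξ) :=
      Submodule.span_le.2 hperp (hd ▸ Submodule.mem_top)
    simpa using hξξ
  obtain ⟨K, -, hK⟩ := T.exists_antilipschitzWith hT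
  exact antilipschitzWith_iff_exists_mul_le_norm.1 ⟨K, hK⟩

variable {K : Type*} {ι : K → Type*}

def weight (α : ∀ i, ι i → E) (ν : ∀ i, ι i → ℝ) (ξ : E) (η : K → ℝ) (i : K) (j : ι i) : ℝ :=
  η i - ⟪α i j, ξ⟫ + ν i j

variable {α : ∀ i, ι i → E} {ν : ∀ i, ι i → ℝ}

theorem weight_sub_weight (ξ : E) (η : K → ℝ) (i : K) (a b : ι i) :
    weight α ν ξ η i b - weight α ν ξ η i a = ⟪α i a - α i b, ξ⟫ + (ν i b - ν i a) := by
  simp only [weight, inner_sub_left]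
  ring

variable [Fintype K] [∀ i, Fintype (ι i)]

def hamiltonian (m : ∀ i, (ι i → ℝ) → ℝ) (α : ∀ i, ι i → E) (ν : ∀ i, ι i → ℝ) (ξ : E)
    (η : K → ℝ) : ℝ :=
  ∑ i, excess (m i) (weight α ν ξ η i)

variable {m : ∀ i, (ι i → ℝ) → ℝ}

theorem hamiltonian_eq_hamiltonian_zero (hm : ∀ i u a, m i (fun j => u j + a) = m i u + a)
    (ξ : E) (η : K → ℝ) : hamiltonian m α ν ξ η = hamiltonian m α ν ξ 0 := by
  refine sum_congr rfl fun i _ => ?_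
  convert excess_add_const (hm i) (weight α ν ξ 0 i) (η i) using 3
  simp only [weight, Pi.zero_apply]
  ring

theorem convexOn_hamiltonian (hm : ∀ i, ConcaveOn ℝ Set.univ (m i)) :
    ConvexOn ℝ Set.univ fun p : E × (K → ℝ) => hamiltonian m α ν p.1 p.2 := by
  refine ConvexOn.finset_sum convex_univ univ fun i _ => ?_
  let A : E × (K → ℝ) →ᵃ[ℝ] ι i → ℝ :=
    (LinearMap.pi fun j => LinearMap.proj i ∘ₗ LinearMap.snd ℝ E (K → ℝ) -
      innerₛₗ ℝ (α i j) ∘ₗ LinearMap.fst ℝ E (K → ℝ)).toAffineMap + AffineMap.const ℝ _ (ν i)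
  exact (convexOn_excess (hm i)).comp_affineMap A

variable [∀ i, Nonempty (ι i)]

theorem excess_le_hamiltonian (hm : ∀ i u, m i u ≤ univ.inf' univ_nonempty u) (ξ : E)
    (η : K → ℝ) (i : K) : excess (m i) (weight α ν ξ η i) ≤ hamiltonian m α ν ξ η :=
  single_le_sum (f := fun i => excess (m i) (weight α ν ξ η i))
    (fun i _ => excess_nonneg (hm i)) (mem_univ i)

theorem hamiltonian_nonneg (hm : ∀ i u, m i u ≤ univ.inf' univ_nonempty u) (ξ : E)
    (η : K → ℝ) : 0 ≤ hamiltonian m α ν ξ η :=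
  sum_nonneg fun i _ => excess_nonneg (hm i)


theorem exists_pos_mul_norm_sub_le_hamiltonian [FiniteDimensional ℝ E]
    (hm : ∀ i u, m i u ≤ univ.inf' univ_nonempty u)
    (hspan : Submodule.span ℝ {d : E | ∃ i a b, d = α i a - α i b} = ⊤) :
    ∃ c > 0, ∃ C, ∀ ξ η, c * ‖ξ‖ - C ≤ hamiltonian m α ν ξ η := by
  let d : (Σ i, ι i × ι i) → E := fun s => α s.1 s.2.1 - α s.1 s.2.2
  have hd : Set.range d = {d : E | ∃ i a b, d = α i a - α i b} := by
    ext v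
    exact ⟨fun ⟨⟨i, a, b⟩, h⟩ => ⟨i, a, b, h.symm⟩, fun ⟨i, a, b, h⟩ => ⟨⟨i, a, b⟩, h.symm⟩⟩
  obtain ⟨c, hc, hcd⟩ := exists_pos_mul_norm_le_norm_inner d (hd ▸ hspan)
  set C := ∑ s : Σ i, ι i × ι i, |ν s.1 s.2.2 - ν s.1 s.2.1|
  have hνC : ∀ i a b, |ν i b - ν i a| ≤ C := fun i a b =>
    single_le_sum (f := fun s : Σ i, ι i × ι i => |ν s.1 s.2.2 - ν s.1 s.2.1|)
      (fun _ _ => abs_nonneg _) (mem_univ ⟨i, a, b⟩)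
  have hC : 0 ≤ C := sum_nonneg fun _ _ => abs_nonneg _
  refine ⟨c, hc, C, fun ξ η => ?_⟩
  have hdC : ‖fun s => ⟪d s, ξ⟫‖ ≤ hamiltonian m α ν ξ η + C := by
    refine (pi_norm_le_iff_of_nonneg (add_nonneg (hamiltonian_nonneg hm ξ η) hC)).2
      fun ⟨i, a, b⟩ => ?_
    have hw := weight_sub_weight (α := α) (ν := ν) ξ η i a b
    calc ‖⟪d ⟨i, a, b⟩, ξ⟫‖
        = |(weight α ν ξ η i b - weight α ν ξ η i a) - (ν i b - ν i a)| := by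
          rw [Real.norm_eq_abs, hw, add_sub_cancel_right]
      _ ≤ |weight α ν ξ η i b - weight α ν ξ η i a| + |ν i b - ν i a| := abs_sub _ _
      _ ≤ hamiltonian m α ν ξ η + C :=
          add_le_add ((abs_sub_le_excess (hm i) b a).trans (excess_le_hamiltonian hm ξ η i))
            (hνC i a b)
  linarith [hcd ξ]

theorem exists_hamiltonian_le {δ : ℝ} (hm : ∀ i u, univ.inf' univ_nonempty u - δ ≤ m i u)
    (hδ : 0 ≤ δ) : ∃ C, ∀ ξ η, hamiltonian m α ν ξ η ≤ C * (‖ξ‖ + 1) := by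
  set B₁ := ∑ s : Σ i, ι i × ι i, ‖α s.1 s.2.1 - α s.1 s.2.2‖
  set B₂ := ∑ s : Σ i, ι i × ι i, |ν s.1 s.2.2 - ν s.1 s.2.1|
  set N : ℝ := ∑ i, (Fintype.card (ι i) : ℝ)
  have hB₁ : ∀ i a b, ‖α i a - α i b‖ ≤ B₁ := fun i a b =>
    single_le_sum (f := fun s : Σ i, ι i × ι i => ‖α s.1 s.2.1 - α s.1 s.2.2‖)
      (fun _ _ => norm_nonneg _) (mem_univ ⟨i, a, b⟩)
  have hB₂ : ∀ i a b, |ν i b - ν i a| ≤ B₂ := fun i a b =>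
    single_le_sum (f := fun s : Σ i, ι i × ι i => |ν s.1 s.2.2 - ν s.1 s.2.1|)
      (fun _ _ => abs_nonneg _) (mem_univ ⟨i, a, b⟩)
  have hB₁0 : 0 ≤ B₁ := sum_nonneg fun _ _ => norm_nonneg _
  have hB₂0 : 0 ≤ B₂ := sum_nonneg fun _ _ => abs_nonneg _
  have hN0 : 0 ≤ N := sum_nonneg fun _ _ => Nat.cast_nonneg _
  refine ⟨N * (B₁ + B₂ + δ), fun ξ η => ?_⟩
  have hosc : ∀ i a b, weight α ν ξ η i b - weight α ν ξ η i a ≤ B₁ * ‖ξ‖ + B₂ := by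
    intro i a b
    rw [weight_sub_weight]
    gcongr
    · exact (real_inner_le_norm _ _).trans (by gcongr; exact hB₁ i a b)
    · exact (le_abs_self _).trans (hB₂ i a b)
  calc hamiltonian m α ν ξ η ≤ ∑ i, Fintype.card (ι i) * (B₁ * ‖ξ‖ + B₂ + δ) :=
        sum_le_sum fun i _ => excess_le (hm i) fun b a => hosc i a b
    _ = N * (B₁ * ‖ξ‖ + B₂ + δ) := (sum_mul _ _ _).symm
    _ ≤ N * (B₁ + B₂ + δ) * (‖ξ‖ + 1) := by
        rw [mul_assoc]
        gcongr
        nlinarith [norm_nonneg ξ]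

end Hamiltonian

theorem stmt_19_general (n k : ℕ)
    (ι : Fin k → Type) [∀ i, Fintype (ι i)] [∀ i, Nonempty (ι i)]
    (α : ∀ i, ι i → EuclideanSpace ℝ (Fin n))
    (hspan : Submodule.span ℝ
      {d : EuclideanSpace ℝ (Fin n) | ∃ i a b, d = α i a - α i b} = ⊤)
    (ν : ∀ i, ι i → ℝ) (δ' : ℝ) (hδ' : 0 ≤ δ')
    (m : ∀ i, (ι i → ℝ) → ℝ)
    (hm_concave : ∀ i, ConcaveOn ℝ Set.univ (m i))
    (hm_shift : ∀ i (u : ι i → ℝ) (a : ℝ), m i (fun j => u j + a) = m i u + a)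
    (hm_min : ∀ i (u : ι i → ℝ),
      Finset.univ.inf' Finset.univ_nonempty u - δ' ≤ m i u ∧
        m i u ≤ Finset.univ.inf' Finset.univ_nonempty u)
    (μ : ∀ i, ι i → EuclideanSpace ℝ (Fin n) → (Fin k → ℝ) → ℝ)
    (hμ : ∀ i j ξ η, μ i j ξ η = η i - ⟪α i j, ξ⟫ + ν i j)
    (H : EuclideanSpace ℝ (Fin n) → (Fin k → ℝ) → ℝ)
    (hH : ∀ ξ η, H ξ η = ∑ i,
      ((∑ j, μ i j ξ η) - (Fintype.card (ι i) : ℝ) * m i fun j => μ i j ξ η)) :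
    (∀ ξ η η', H ξ η = H ξ η') ∧
    ConvexOn ℝ Set.univ (fun p : EuclideanSpace ℝ (Fin n) × (Fin k → ℝ) => H p.1 p.2) ∧
    (∀ ξ η, 0 ≤ H ξ η) ∧
    ∃ c C : ℝ, 0 < c ∧ 0 < C ∧
      ∀ ξ η, c * ‖ξ‖ - C ≤ H ξ η ∧ H ξ η ≤ C * (‖ξ‖ + 1) := by
  have hH' : H = hamiltonian m α ν := by
    ext ξ η
    simp only [hH, hμ, hamiltonian, excess_eq_sum_sub_card_mul]
    rfl
  have hm_inf : ∀ i u, m i u ≤ univ.inf' univ_nonempty u := fun i u => (hm_min i u).2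
  obtain ⟨c, hc, C₁, hlow⟩ := exists_pos_mul_norm_sub_le_hamiltonian (ν := ν) hm_inf hspan
  obtain ⟨C₂, hup⟩ :=
    exists_hamiltonian_le (α := α) (ν := ν) (fun i u => (hm_min i u).1) hδ'
  subst hH'
  refine ⟨fun ξ η η' => ?_, convexOn_hamiltonian hm_concave, hamiltonian_nonneg hm_inf,
    c, max (max C₁ C₂) 1, hc, by positivity, fun ξ η => ⟨?_, ?_⟩⟩
  · rw [hamiltonian_eq_hamiltonian_zero hm_shift, hamiltonian_eq_hamiltonian_zero hm_shift ξ η']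
  · linarith [hlow ξ η, le_max_left (max C₁ C₂) 1, le_max_left C₁ C₂]
  · refine (hup ξ η).trans (mul_le_mul_of_nonneg_right ?_ (by positivity))
    exact (le_max_right C₁ C₂).trans (le_max_left _ 1)

/-- Properties of the wrapping Hamiltonian for complete
intersections,
`H(ξ,η) = Σᵢ (Σ_α μ_{i,α}(ξ,η) − |P_{i,ℤ}|·mᵢ((μ_{i,α}(ξ,η))_α))` with
`μ_{i,α}(ξ,η) = ηᵢ − ⟨α,ξ⟩ + νᵢ(α)`: assuming the differences of the points in
the supports span `ℝⁿ`, `H` depends only on `ξ`, is convex, nonnegative,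
proper and of linear growth. -/
theorem stmt_19 (n k : ℕ) (hn : 1 ≤ n) (hk : 1 ≤ k)
    (ι : Fin k → Type) [∀ i, Fintype (ι i)] [∀ i, Nonempty (ι i)]
    (α : ∀ i, ι i → EuclideanSpace ℝ (Fin n))
    (hα_int : ∀ i j l, ∃ z : ℤ, α i j l = (z : ℝ))
    (hspan : Submodule.span ℝ
      {d : EuclideanSpace ℝ (Fin n) | ∃ i a b, d = α i a - α i b} = ⊤)
    (ν : ∀ i, ι i → ℝ) (δ' : ℝ) (hδ' : 0 ≤ δ')
    (m : ∀ i, (ι i → ℝ) → ℝ)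
    (hm_concave : ∀ i, ConcaveOn ℝ Set.univ (m i))
    (hm_shift : ∀ i (u : ι i → ℝ) (a : ℝ), m i (fun j => u j + a) = m i u + a)
    (hm_min : ∀ i (u : ι i → ℝ),
      Finset.univ.inf' Finset.univ_nonempty u - δ' ≤ m i u ∧
        m i u ≤ Finset.univ.inf' Finset.univ_nonempty u)
    (μ : ∀ i, ι i → EuclideanSpace ℝ (Fin n) → (Fin k → ℝ) → ℝ)
    (hμ : ∀ i j ξ η, μ i j ξ η = η i - ⟪α i j, ξ⟫ + ν i j)
    (H : EuclideanSpace ℝ (Fin n) → (Fin k → ℝ) → ℝ)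
    (hH : ∀ ξ η, H ξ η = ∑ i,
      ((∑ j, μ i j ξ η) - (Fintype.card (ι i) : ℝ) * m i fun j => μ i j ξ η)) :
    (∀ ξ η η', H ξ η = H ξ η') ∧
    ConvexOn ℝ Set.univ (fun p : EuclideanSpace ℝ (Fin n) × (Fin k → ℝ) => H p.1 p.2) ∧
    (∀ ξ η, 0 ≤ H ξ η) ∧
    ∃ c C : ℝ, 0 < c ∧ 0 < C ∧
      ∀ ξ η, c * ‖ξ‖ - C ≤ H ξ η ∧ H ξ η ≤ C * (‖ξ‖ + 1) :=
  stmt_19_general n k ι α hspan ν δ' hδ' m hm_concave hm_shift hm_min μ hμ H hH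
end
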